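/- arXiv:2602.01487 — 6 statements merged into one kernel-verified Lean document; each statement's English description precedes it below -/
import Mathlib

section
/- For 0 < D < 1, g_u < 0 and g_v < 0, the expression k² = (g_v + g_u)/(1−D) ± ((1+D)/(1−D))·√(g_v g_u / D) factorises as k² = −[√D·√(−g_v) ± √(−g_u)]·[√(−g_v) ± √D·√(−g_u)] / ((1−D)√D), and the choice with sign − is positive if and only if D·g_u > g_v (Turing instability condition, given also g_v > g_u/D is violated appropriately); in particular one of the two values of k² is always negative. -/
/-!
Put `a = √(-g_u)`, `b = √(-g_v)`, `d = √D`, so that `√(g_v g_u / D) = a b / d`. For `s² = 1`,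
`(d b - s a)(b - s d a) = d (a² + b²) - s a b (1 + d²)`, which is the factorisation. The value with
`s = -1` is a negative number minus a nonnegative one. For `s = 1` the value is positive iff
`(d b - a)(b - d a) < 0`; both factors cannot be positive since `d < 1` (that would force
`a < d b < b < d a < a`), so this means `d b < a` and `d a < b`, i.e. after squaring
`D g_v > g_u` and `D g_u > g_v`.
-/

open Real

lemma Real.sqrt_mul_div_of_nonpos {x y D : ℝ} (hx : x ≤ 0) (hD : 0 ≤ D) :
    √(x * y / D) = √(-x) * √(-y) / √D := by
  rw [← neg_mul_neg, sqrt_div' _ hD, sqrt_mul (neg_nonneg.2 hx)]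

lemma Real.sqrt_mul_sqrt_lt_sqrt_iff {D x y : ℝ} (hD : 0 ≤ D) (hx : 0 ≤ x) :
    √D * √x < √y ↔ D * x < y := by
  rw [← sqrt_mul hD, sqrt_lt_sqrt_iff (mul_nonneg hD hx)]

lemma critical_wavenumber_factor_identity {a b d s : ℝ} (hd : d ≠ 0) (hd1 : 1 - d ^ 2 ≠ 0)
    (hs : s ^ 2 = 1) :
    (-b ^ 2 + -a ^ 2) / (1 - d ^ 2) + s * ((1 + d ^ 2) / (1 - d ^ 2)) * (b * a / d)
      = -((d * b - s * a) * (b - s * d * a)) / ((1 - d ^ 2) * d) := by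
  field_simp
  linear_combination a ^ 2 * d * hs

lemma critical_wavenumber_eq_factor {D gu gv s : ℝ} (hD0 : 0 < D) (hD1 : D ≠ 1)
    (hgu : gu ≤ 0) (hgv : gv ≤ 0) (hs : s ^ 2 = 1) :
    (gv + gu) / (1 - D) + s * ((1 + D) / (1 - D)) * √(gv * gu / D)
      = -((√D * √(-gv) - s * √(-gu)) * (√(-gv) - s * √D * √(-gu))) / ((1 - D) * √D) := by
  have hD : √D ^ 2 = D := sq_sqrt hD0.le
  have identity := critical_wavenumber_factor_identity (a := √(-gu)) (b := √(-gv))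
    (sqrt_pos.2 hD0).ne' (by rw [hD]; exact sub_ne_zero.2 hD1.symm) hs
  rwa [hD, sq_sqrt (neg_nonneg.2 hgu), sq_sqrt (neg_nonneg.2 hgv), neg_neg, neg_neg,
    ← sqrt_mul_div_of_nonpos hgv hD0.le] at identity

lemma sub_mul_sub_neg_iff_of_lt_one {a b d : ℝ} (ha : 0 < a) (hb : 0 < b) (hd : d < 1) :
    (d * b - a) * (b - d * a) < 0 ↔ d * b < a ∧ d * a < b := by
  rw [mul_neg_iff, sub_pos, sub_neg, sub_neg, sub_pos]
  constructor
  · rintro (⟨had, hbd⟩ | h)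
    · linarith [mul_lt_of_lt_one_left hb hd, mul_lt_of_lt_one_left ha hd]
    · exact h
  · exact Or.inr

/-- For 0 < D < 1, g_u < 0, g_v < 0, the critical wavenumbers
k² = (g_v+g_u)/(1−D) ± ((1+D)/(1−D))√(g_v g_u/D) factorise as
k² = −[√D√(−g_v) ± √(−g_u)]·[√(−g_v) ± √D√(−g_u)]/((1−D)√D)
(the sign + in the original corresponds to the sign − in the factorisation);
the value with sign + is positive iff D g_u > g_v and D g_v > g_u (i.e. g_v > g_u/D),
and the value with sign − is always negative. -/
theorem critical_wavenumber_factorisation (D gu gv : ℝ)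
    (hD0 : 0 < D) (hD1 : D < 1) (hgu : gu < 0) (hgv : gv < 0) :
    (∀ s : ℝ, s = 1 ∨ s = -1 →
      (gv + gu) / (1 - D) + s * ((1 + D) / (1 - D)) * Real.sqrt (gv * gu / D)
        = -((Real.sqrt D * Real.sqrt (-gv) - s * Real.sqrt (-gu))
            * (Real.sqrt (-gv) - s * Real.sqrt D * Real.sqrt (-gu)))
          / ((1 - D) * Real.sqrt D))
    ∧ (gv + gu) / (1 - D) - ((1 + D) / (1 - D)) * Real.sqrt (gv * gu / D) < 0
    ∧ (0 < (gv + gu) / (1 - D) + ((1 + D) / (1 - D)) * Real.sqrt (gv * gu / D)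
        ↔ D * gu > gv ∧ D * gv > gu) := by
  have h1D : 0 < 1 - D := sub_pos.2 hD1
  have factor {s : ℝ} (hs : s ^ 2 = 1) :=
    critical_wavenumber_eq_factor (gu := gu) (gv := gv) hD0 hD1.ne hgu.le hgv.le hs
  refine ⟨fun s hs => factor (by rcases hs with rfl | rfl <;> norm_num), ?_, ?_⟩
  · have hsum : (gv + gu) / (1 - D) < 0 := div_neg_of_neg_of_pos (by linarith) h1D
    have hroot : 0 ≤ (1 + D) / (1 - D) * √(gv * gu / D) :=
      mul_nonneg (div_nonneg (by linarith) h1D.le) (sqrt_nonneg _)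
    linarith
  · have hplus := factor (one_pow 2)
    simp only [one_mul] at hplus
    rw [hplus, div_pos_iff_of_pos_right (mul_pos h1D (sqrt_pos.2 hD0)), neg_pos,
      sub_mul_sub_neg_iff_of_lt_one (sqrt_pos.2 (neg_pos.2 hgu)) (sqrt_pos.2 (neg_pos.2 hgv))
        (by simpa using sqrt_lt_sqrt hD0.le hD1),
      sqrt_mul_sqrt_lt_sqrt_iff hD0.le (neg_nonneg.2 hgv.le),
      sqrt_mul_sqrt_lt_sqrt_iff hD0.le (neg_nonneg.2 hgu.le)]
    constructor <;> rintro ⟨h₁, h₂⟩ <;> constructor <;> linarith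
end

section
/- Suppose v : ℝ → ℝ is a C² solution of v'' + c v' − G(v) = 0 which, together with v', tends to 0 as z → ±∞, G is continuous with G(0)=0, and v, v' ∈ L². Then c · ∫ (v')² dz = 0; hence if v is not constant, c = 0. In particular, no nonstationary homoclinic (pulse) solutions exist. -/
/-!
Along a solution the energy `E = (v')²/2 - H(v)`, with `H` a primitive of `G`, satisfies
`E' = -c (v')²`, so it is monotone, and it tends to `0` at both ends. A monotone function with
the same limit at `±∞` is constant, hence `c (v')² ≡ 0`, which gives both claims at once.
-/

open MeasureTheory Filter Topology

theorem mul_eq_zero_of_hasDerivAt_of_tendsto {F g : ℝ → ℝ} {k a : ℝ}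
    (hF : ∀ x, HasDerivAt F (k * g x) x) (hg : ∀ x, 0 ≤ g x)
    (hbot : Tendsto F atBot (𝓝 a)) (htop : Tendsto F atTop (𝓝 a)) (x : ℝ) :
    k * g x = 0 := by
  have hconst : ∀ y, F y = a := by
    rcases le_total 0 k with hk | hk
    · have hmono := monotone_of_hasDerivAt_nonneg hF fun y => mul_nonneg hk (hg y)
      exact fun y => le_antisymm (hmono.ge_of_tendsto htop y) (hmono.le_of_tendsto hbot y)
    · have hanti :=
        antitone_of_hasDerivAt_nonpos hF fun y => mul_nonpos_of_nonpos_of_nonneg hk (hg y)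
      exact fun y => le_antisymm (hanti.ge_of_tendsto hbot y) (hanti.le_of_tendsto htop y)
  have hFa : F = fun _ => a := funext hconst
  exact (hF x).unique (hFa ▸ hasDerivAt_const x a)

noncomputable def potential (G : ℝ → ℝ) (u : ℝ) : ℝ :=
  ∫ t in (0 : ℝ)..u, G t

theorem potential_zero (G : ℝ → ℝ) : potential G 0 = 0 :=
  intervalIntegral.integral_same

theorem hasDerivAt_potential {G : ℝ → ℝ} (hG : Continuous G) (u : ℝ) :
    HasDerivAt (potential G) (G u) u :=
  intervalIntegral.integral_hasDerivAt_right (hG.intervalIntegrable _ _)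
    (hG.stronglyMeasurableAtFilter _ _) hG.continuousAt

theorem continuous_potential {G : ℝ → ℝ} (hG : Continuous G) : Continuous (potential G) :=
  continuous_iff_continuousAt.mpr fun u => (hasDerivAt_potential hG u).continuousAt

noncomputable def energy (G v : ℝ → ℝ) (z : ℝ) : ℝ :=
  deriv v z ^ 2 / 2 - potential G (v z)

theorem hasDerivAt_energy {c : ℝ} {G v : ℝ → ℝ} (hG : Continuous G)
    (hv : Differentiable ℝ v) (hv' : Differentiable ℝ (deriv v))
    (hODE : ∀ z, deriv (deriv v) z + c * deriv v z - G (v z) = 0) (z : ℝ) :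
    HasDerivAt (energy G v) (-c * deriv v z ^ 2) z := by
  have hkin : HasDerivAt (fun z => deriv v z ^ 2 / 2) (deriv (deriv v) z * deriv v z) z :=
    (((hv' z).hasDerivAt.pow 2).div_const 2).congr_deriv (by ring)
  have hpot : HasDerivAt (fun z => potential G (v z)) (G (v z) * deriv v z) z :=
    (hasDerivAt_potential hG (v z)).comp z (hv z).hasDerivAt
  refine (hkin.sub hpot).congr_deriv ?_
  linear_combination deriv v z * hODE z

theorem tendsto_energy_zero {G v : ℝ → ℝ} {l : Filter ℝ} (hG : Continuous G)
    (hv : Tendsto v l (𝓝 0)) (hv' : Tendsto (deriv v) l (𝓝 0)) :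
    Tendsto (energy G v) l (𝓝 0) := by
  have hkin : Tendsto (fun z => deriv v z ^ 2 / 2) l (𝓝 0) := by
    simpa using (hv'.pow 2).div_const 2
  have hpot : Tendsto (potential G ∘ v) l (𝓝 0) := by
    simpa [potential_zero] using ((continuous_potential hG).tendsto 0).comp hv
  have := hkin.sub hpot
  rwa [sub_zero] at this

theorem no_nonstationary_pulses_D_one_general (c : ℝ) (G : ℝ → ℝ) (v : ℝ → ℝ)
    (hG : Continuous G)
    (hv : ContDiff ℝ 2 v)
    (hODE : ∀ z : ℝ, deriv (deriv v) z + c * deriv v z - G (v z) = 0)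
    (hvTop : Tendsto v atTop (nhds 0)) (hvBot : Tendsto v atBot (nhds 0))
    (hv'Top : Tendsto (deriv v) atTop (nhds 0))
    (hv'Bot : Tendsto (deriv v) atBot (nhds 0)) :
    c * ∫ z : ℝ, (deriv v z) ^ 2 = 0
      ∧ ((¬ ∀ x y : ℝ, v x = v y) → c = 0) := by
  have hvdiff : Differentiable ℝ v := hv.differentiable (by norm_num)
  have hv'diff : Differentiable ℝ (deriv v) :=
    ((contDiff_succ_iff_deriv (n := 1)).mp hv).2.2.differentiable (by norm_num)
  have hdissipation : ∀ z, c * deriv v z ^ 2 = 0 := fun z => by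
    have := mul_eq_zero_of_hasDerivAt_of_tendsto (hasDerivAt_energy hG hvdiff hv'diff hODE)
      (fun z => sq_nonneg (deriv v z)) (tendsto_energy_zero hG hvBot hv'Bot)
      (tendsto_energy_zero hG hvTop hv'Top) z
    linarith
  refine ⟨by simp [← integral_const_mul, hdissipation], fun hnonconst => ?_⟩
  by_contra hc
  exact hnonconst (is_const_of_deriv_eq_zero hvdiff fun z => by simpa [hc] using hdissipation z)

/-- For a C² homoclinic solution of v'' + c v' − G(v) = 0 decaying (with
its derivative) at ±∞, we have c·∫(v')² = 0; hence if v is not constant then c = 0. -/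
theorem no_nonstationary_pulses_D_one (c : ℝ) (G : ℝ → ℝ) (v : ℝ → ℝ)
    (hG : Continuous G) (hG0 : G 0 = 0)
    (hv : ContDiff ℝ 2 v)
    (hODE : ∀ z : ℝ, deriv (deriv v) z + c * deriv v z - G (v z) = 0)
    (hvTop : Tendsto v atTop (nhds 0)) (hvBot : Tendsto v atBot (nhds 0))
    (hv'Top : Tendsto (deriv v) atTop (nhds 0))
    (hv'Bot : Tendsto (deriv v) atBot (nhds 0))
    (hvL2 : Integrable (fun z => (v z) ^ 2))
    (hv'L2 : Integrable (fun z => (deriv v z) ^ 2)) :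
    c * ∫ z : ℝ, (deriv v z) ^ 2 = 0
      ∧ ((¬ ∀ x y : ℝ, v x = v y) → c = 0) :=
  no_nonstationary_pulses_D_one_general c G v hG hv hODE hvTop hvBot hv'Top hv'Bot
end

section
/- The function q(z) = sech³(z) satisfies q'' + 12 sech²(z) q − 4q = 5q; that is, λ = 5 is an eigenvalue of the Schrödinger-type operator q ↦ q'' + 12 sech²(z) q − 4q, with positive eigenfunction sech³. Hence the stationary pulse is spectrally unstable. -/
/-! Differentiating twice and using `sinh² = cosh² - 1` gives, for every `n`,
`(sechⁿ)'' = n² sechⁿ - n (n + 1) sech² sechⁿ`. For `n = 3` the potential `12 sech²` exactly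
cancels the second term, leaving `(9 - 4) sech³ = 5 sech³`. -/

open Real

lemma hasDerivAt_one_div_cosh_pow (n : ℕ) (z : ℝ) :
    HasDerivAt (fun z => (1 / cosh z) ^ n) (-n * sinh z / cosh z ^ (n + 1)) z := by
  have hc : cosh z ≠ 0 := (cosh_pos z).ne'
  have h := ((hasDerivAt_cosh z).fun_pow n).fun_inv (pow_ne_zero n hc)
  simp only [one_div, ← inv_pow] at h ⊢
  refine h.congr_deriv ?_
  rcases n with _ | n
  · simp
  · rw [Nat.add_sub_cancel]
    field_simp
    ring

lemma hasDerivAt_sinh_div_cosh_pow (n : ℕ) (z : ℝ) :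
    HasDerivAt (fun z => sinh z / cosh z ^ (n + 1))
      ((cosh z ^ 2 - (n + 1) * sinh z ^ 2) / cosh z ^ (n + 2)) z := by
  have hc : cosh z ≠ 0 := (cosh_pos z).ne'
  refine ((hasDerivAt_sinh z).fun_div ((hasDerivAt_cosh z).fun_pow (n + 1))
    (pow_ne_zero _ hc)).congr_deriv ?_
  rw [Nat.add_sub_cancel]
  field_simp
  push_cast
  ring

lemma deriv_deriv_one_div_cosh_pow (n : ℕ) (z : ℝ) :
    deriv (deriv fun z => (1 / cosh z) ^ n) z
      = n ^ 2 * (1 / cosh z) ^ n - n * (n + 1) * (1 / cosh z) ^ 2 * (1 / cosh z) ^ n := by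
  have hderiv : deriv (fun z => (1 / cosh z) ^ n) = fun z => -n * (sinh z / cosh z ^ (n + 1)) := by
    ext x
    rw [(hasDerivAt_one_div_cosh_pow n x).deriv, mul_div_assoc]
  rw [hderiv, deriv_const_mul _ (hasDerivAt_sinh_div_cosh_pow n z).differentiableAt,
    (hasDerivAt_sinh_div_cosh_pow n z).deriv]
  have hc : cosh z ≠ 0 := (cosh_pos z).ne'
  rw [sinh_sq, one_div, inv_pow]
  field_simp
  ring

/-- λ = 5 is an eigenvalue of q ↦ q'' + 12 sech² q − 4q with positive
eigenfunction sech³; hence the stationary pulse is spectrally unstable. -/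
theorem unstable_eigenvalue_stationary_pulse :
    let q : ℝ → ℝ := fun z => (1 / Real.cosh z) ^ 3
    (∀ z : ℝ, deriv (deriv q) z + 12 * (1 / Real.cosh z) ^ 2 * q z - 4 * q z = 5 * q z)
      ∧ ∀ z : ℝ, 0 < q z := by
  intro q
  refine ⟨fun z => ?_, fun z => by have := cosh_pos z; positivity⟩
  rw [deriv_deriv_one_div_cosh_pow 3 z]
  push_cast
  ring
end

section
/- The function q(z) = sech²(z) satisfies q'' + 6 sech²(z) q − 4q = 0, and the operator q ↦ q'' + 6 sech²(z) q − 4q has no eigenvalue λ > 0 with eigenfunction in L²(ℝ); its point spectrum is {−3, 0} with eigenfunctions sech(z)tanh(z) and sech²(z) respectively. -/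
/-!
Writing `s = sech`, `t = tanh`, the identities `s' = -s t`, `t' = s²` and `s² + t² = 1` reduce the
two eigenfunction identities to polynomial algebra in `s` and `t`.

For `λ > 0`, compare an eigenfunction `q` with the positive zero mode `φ = sech²`: the Wronskian
`W = φ q' - φ' q` and the quotient `r = q / φ` satisfy `r' = W / φ²` and `W' = λ φ² r`. Along this
system `(r W)' ≥ 0`, so once `r` and `W` are both positive they stay positive and `W` increases.
Then `((q - κ) cosh²)' ≥ κ (cosh⁴ - 2 sinh cosh) ≥ 0` for `κ ≤ W`, so `q` stays above a positive
constant near `+∞` and `q²` is not integrable. Up to `q ↦ -q` and `z ↦ -z` we may assume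
`q(z₀) > 0` and `W(z₀) ≥ 0`.
-/

open MeasureTheory Real Set Filter Topology

lemma tanh_sq_add_one_div_cosh_sq (z : ℝ) : tanh z ^ 2 + (1 / cosh z) ^ 2 = 1 := by
  rw [tanh_eq_sinh_div_cosh]
  field_simp
  linear_combination -(cosh_sq_sub_sinh_sq z)

lemma hasDerivAt_one_div_cosh (z : ℝ) :
    HasDerivAt (fun w => 1 / cosh w) (-(1 / cosh z) * tanh z) z := by
  refine ((hasDerivAt_const z (1 : ℝ)).div (hasDerivAt_cosh z) (cosh_pos z).ne').congr_deriv ?_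
  rw [tanh_eq_sinh_div_cosh]
  field_simp
  ring

lemma hasDerivAt_tanh (z : ℝ) : HasDerivAt tanh ((1 / cosh z) ^ 2) z := by
  have htanh : tanh = fun w => sinh w / cosh w := funext tanh_eq_sinh_div_cosh
  rw [htanh]
  refine ((hasDerivAt_sinh z).div (hasDerivAt_cosh z) (cosh_pos z).ne').congr_deriv ?_
  field_simp
  linear_combination cosh_sq_sub_sinh_sq z

lemma hasDerivAt_sech_sq (z : ℝ) :
    HasDerivAt (fun w => (1 / cosh w) ^ 2) (-2 * (1 / cosh z) ^ 2 * tanh z) z := by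
  refine ((hasDerivAt_one_div_cosh z).pow 2).congr_deriv ?_
  ring

lemma hasDerivAt_deriv_sech_sq (z : ℝ) :
    HasDerivAt (fun w => -2 * (1 / cosh w) ^ 2 * tanh w)
      (-(6 * (1 / cosh z) ^ 2 - 4) * (1 / cosh z) ^ 2) z := by
  refine (((hasDerivAt_sech_sq z).const_mul (-2)).mul (hasDerivAt_tanh z)).congr_deriv ?_
  linear_combination (4 * (1 / cosh z) ^ 2) * tanh_sq_add_one_div_cosh_sq z

lemma deriv_deriv_sech_sq (z : ℝ) :
    deriv (deriv fun w => (1 / cosh w) ^ 2) z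
      = -(6 * (1 / cosh z) ^ 2 - 4) * (1 / cosh z) ^ 2 := by
  rw [funext fun w => (hasDerivAt_sech_sq w).deriv, (hasDerivAt_deriv_sech_sq z).deriv]

lemma hasDerivAt_sech_mul_tanh (z : ℝ) :
    HasDerivAt (fun w => 1 / cosh w * tanh w) (1 / cosh z * (2 * (1 / cosh z) ^ 2 - 1)) z := by
  refine ((hasDerivAt_one_div_cosh z).mul (hasDerivAt_tanh z)).congr_deriv ?_
  linear_combination -(1 / cosh z) * tanh_sq_add_one_div_cosh_sq z

lemma hasDerivAt_deriv_sech_mul_tanh (z : ℝ) :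
    HasDerivAt (fun w => 1 / cosh w * (2 * (1 / cosh w) ^ 2 - 1))
      (1 / cosh z * tanh z * (1 - 6 * (1 / cosh z) ^ 2)) z := by
  refine ((hasDerivAt_one_div_cosh z).mul
    (((hasDerivAt_sech_sq z).const_mul 2).sub_const 1)).congr_deriv ?_
  ring

lemma deriv_deriv_sech_mul_tanh (z : ℝ) :
    deriv (deriv fun w => 1 / cosh w * tanh w) z
      = 1 / cosh z * tanh z * (1 - 6 * (1 / cosh z) ^ 2) := by
  rw [funext fun w => (hasDerivAt_sech_mul_tanh w).deriv, (hasDerivAt_deriv_sech_mul_tanh z).deriv]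

lemma monotoneOn_Ici_of_hasDerivAt_nonneg {f f' : ℝ → ℝ} {a : ℝ}
    (hf : ∀ x, HasDerivAt f (f' x) x) (hf' : ∀ x > a, 0 ≤ f' x) : MonotoneOn f (Ici a) :=
  monotoneOn_of_hasDerivWithinAt_nonneg (convex_Ici a)
    (fun x _ => (hf x).continuousAt.continuousWithinAt) (fun x _ => (hf x).hasDerivWithinAt)
    (fun x hx => hf' x (by rwa [interior_Ici] at hx))

lemma exists_pos_pos_of_hasDerivAt {r u : ℝ → ℝ} {z₀ c : ℝ} (hr : ContinuousAt r z₀)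
    (hu : HasDerivAt u c z₀) (hc : 0 < c) (hr₀ : 0 < r z₀) (hu₀ : 0 ≤ u z₀) :
    ∃ z, 0 < r z ∧ 0 < u z := by
  rcases hu₀.lt_or_eq with hu₀ | hu₀
  · exact ⟨z₀, hr₀, hu₀⟩
  have hslope : ∀ᶠ z in 𝓝[>] z₀, 0 < slope u z₀ z :=
    ((hasDerivAt_iff_tendsto_slope.mp hu).mono_left (nhdsGT_le_nhdsNE z₀)).eventually
      (eventually_gt_nhds hc)
  have hr_pos : ∀ᶠ z in 𝓝[>] z₀, 0 < r z :=
    nhdsWithin_le_nhds (hr.eventually (eventually_gt_nhds hr₀))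
  obtain ⟨z, hz, hrz, hsz⟩ := (eventually_mem_nhdsWithin.and (hr_pos.and hslope)).exists
  exact ⟨z, hrz, pos_of_slope_pos hz hsz hu₀.symm⟩

lemma monotone_mul_of_hasDerivAt {r u w p : ℝ → ℝ}
    (hr : ∀ z, HasDerivAt r (w z * u z) z) (hu : ∀ z, HasDerivAt u (p z * r z) z)
    (hw : ∀ z, 0 ≤ w z) (hp : ∀ z, 0 ≤ p z) : Monotone fun z => r z * u z :=
  monotone_of_hasDerivAt_nonneg (fun z => (hr z).mul (hu z)) fun z => by
    simp only [Pi.zero_apply]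
    nlinarith [mul_nonneg (hw z) (sq_nonneg (u z)), mul_nonneg (hp z) (sq_nonneg (r z))]

theorem exists_pos_forall_le_of_hasDerivAt {r u w p : ℝ → ℝ} {z₀ : ℝ}
    (hr : ∀ z, HasDerivAt r (w z * u z) z) (hu : ∀ z, HasDerivAt u (p z * r z) z)
    (hw : ∀ z, 0 < w z) (hp : ∀ z, 0 < p z) (hr₀ : 0 < r z₀) (hu₀ : 0 ≤ u z₀) :
    ∃ z₁, 0 < r z₁ ∧ 0 < u z₁ ∧ ∀ z ≥ z₁, u z₁ ≤ u z := by
  obtain ⟨z₁, hr₁, hu₁⟩ := exists_pos_pos_of_hasDerivAt (hr z₀).continuousAt (hu z₀)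
    (mul_pos (hp z₀) hr₀) hr₀ hu₀
  have hru := monotone_mul_of_hasDerivAt hr hu (fun z => (hw z).le) (fun z => (hp z).le)
  have hr_cont : Continuous r := continuous_iff_continuousAt.mpr fun z => (hr z).continuousAt
  have hr_pos : ∀ z ≥ z₁, 0 < r z := by
    intro z hz
    by_contra! hrz
    obtain ⟨c, hc, hrc⟩ := intermediate_value_Icc' hz hr_cont.continuousOn ⟨hrz, hr₁.le⟩
    have hru_c : r z₁ * u z₁ ≤ r c * u c := hru hc.1
    rw [hrc, zero_mul] at hru_c
    exact (mul_pos hr₁ hu₁).not_ge hru_c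
  refine ⟨z₁, hr₁, hu₁, fun z hz => ?_⟩
  exact monotoneOn_Ici_of_hasDerivAt_nonneg hu
    (fun x hx => mul_nonneg (hp x).le (hr_pos x hx.le).le) self_mem_Ici hz hz

def wronskian (f f' g g' : ℝ → ℝ) (z : ℝ) : ℝ := f z * g' z - f' z * g z

section Wronskian

variable {φ φ' q q' : ℝ → ℝ}

lemma hasDerivAt_wronskian {v lam z : ℝ} (hφ : HasDerivAt φ (φ' z) z)
    (hφ' : HasDerivAt φ' (-v * φ z) z) (hq : HasDerivAt q (q' z) z)
    (hq' : HasDerivAt q' ((lam - v) * q z) z) :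
    HasDerivAt (wronskian φ φ' q q') (lam * φ z * q z) z :=
  ((hφ.mul hq').sub (hφ'.mul hq)).congr_deriv (by ring)

lemma hasDerivAt_div_eq_wronskian {z : ℝ} (hφ : HasDerivAt φ (φ' z) z)
    (hq : HasDerivAt q (q' z) z) (hφ₀ : φ z ≠ 0) :
    HasDerivAt (fun x => q x / φ x) (1 / φ z ^ 2 * wronskian φ φ' q q' z) z := by
  refine (hq.div hφ hφ₀).congr_deriv ?_
  unfold wronskian
  ring

theorem exists_pos_wronskian_forall_le {V : ℝ → ℝ} {lam z₀ : ℝ} (hlam : 0 < lam)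
    (hφ_pos : ∀ z, 0 < φ z) (hφ : ∀ z, HasDerivAt φ (φ' z) z)
    (hφ' : ∀ z, HasDerivAt φ' (-V z * φ z) z) (hq : ∀ z, HasDerivAt q (q' z) z)
    (hq' : ∀ z, HasDerivAt q' ((lam - V z) * q z) z)
    (hq₀ : 0 < q z₀) (hW₀ : 0 ≤ wronskian φ φ' q q' z₀) :
    ∃ z₁, 0 < q z₁ ∧ 0 < wronskian φ φ' q q' z₁
      ∧ ∀ z ≥ z₁, wronskian φ φ' q q' z₁ ≤ wronskian φ φ' q q' z := by
  have hW : ∀ z, HasDerivAt (wronskian φ φ' q q')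
      (lam * φ z ^ 2 * (fun x => q x / φ x) z) z := fun z =>
    (hasDerivAt_wronskian (hφ z) (hφ' z) (hq z) (hq' z)).congr_deriv
      (by field_simp [(hφ_pos z).ne'])
  obtain ⟨z₁, hr₁, hW₁, hmono⟩ := exists_pos_forall_le_of_hasDerivAt
    (fun z => hasDerivAt_div_eq_wronskian (hφ z) (hq z) (hφ_pos z).ne') hW
    (fun z => one_div_pos.mpr (pow_pos (hφ_pos z) 2)) (fun z => mul_pos hlam (pow_pos (hφ_pos z) 2))
    (div_pos hq₀ (hφ_pos z₀)) hW₀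
  exact ⟨z₁, (div_pos_iff_of_pos_right (hφ_pos z₁)).mp hr₁, hW₁, hmono⟩

end Wronskian

local notation "W₀" => wronskian (fun w => (1 / cosh w) ^ 2) (fun w => -2 * (1 / cosh w) ^ 2 * tanh w)

lemma not_integrable_of_forall_ge {f : ℝ → ℝ} {a c : ℝ} (hc : 0 < c) (hf : ∀ x ≥ a, c ≤ f x) :
    ¬ Integrable f := by
  intro hint
  have hconst : IntegrableOn (fun _ => c) (Ici a) := by
    refine hint.integrableOn.mono' aestronglyMeasurable_const ?_
    filter_upwards [ae_restrict_mem measurableSet_Ici] with x hx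
    rw [Real.norm_of_nonneg hc.le]
    exact hf x hx
  rw [integrableOn_const_iff, Real.volume_Ici] at hconst
  simp [hc.ne'] at hconst

lemma two_mul_sinh_mul_cosh_le_cosh_pow_four (x : ℝ) : 2 * sinh x * cosh x ≤ cosh x ^ 4 := by
  nlinarith [sq_nonneg (sinh x * cosh x - 1), cosh_sq x, one_le_cosh x]

lemma forall_ge_le_of_le_wronskian_sech_sq {q q' : ℝ → ℝ} {κ z₁ : ℝ} (hκ : 0 ≤ κ)
    (hq : ∀ z, HasDerivAt q (q' z) z)
    (hW : ∀ z ≥ z₁, κ ≤ W₀ q q' z) (h₁ : κ ≤ q z₁) : ∀ z ≥ z₁, κ ≤ q z := by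
  have hG : ∀ x, HasDerivAt (fun x => (q x - κ) * cosh x ^ 2)
      (q' x * cosh x ^ 2 + (q x - κ) * (2 * cosh x * sinh x)) x := fun x =>
    (((hq x).sub_const κ).mul ((hasDerivAt_cosh x).pow 2)).congr_deriv
      (by simp only [Pi.pow_apply]; ring)
  have hG' : ∀ x > z₁, 0 ≤ q' x * cosh x ^ 2 + (q x - κ) * (2 * cosh x * sinh x) := by
    intro x hx
    have hWx := hW x hx.le
    have hcosh := cosh_pos x
    have hW_eq : q' x * cosh x ^ 2 + q x * (2 * cosh x * sinh x) = cosh x ^ 4 * W₀ q q' x := by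
      simp only [wronskian, tanh_eq_sinh_div_cosh]
      field_simp
      ring
    nlinarith [mul_le_mul_of_nonneg_left hWx (pow_nonneg hcosh.le 4),
      mul_le_mul_of_nonneg_left (two_mul_sinh_mul_cosh_le_cosh_pow_four x) hκ]
  intro z hz
  have hmono := monotoneOn_Ici_of_hasDerivAt_nonneg hG hG' self_mem_Ici hz hz
  have h₁' : 0 ≤ (q z₁ - κ) * cosh z₁ ^ 2 := mul_nonneg (sub_nonneg.mpr h₁) (by positivity)
  have hqz := (mul_nonneg_iff_of_pos_right (pow_pos (cosh_pos z) 2)).mp (h₁'.trans hmono)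
  linarith

lemma not_integrable_sq_of_pos_of_wronskian_nonneg {q q' : ℝ → ℝ} {lam z₀ : ℝ} (hlam : 0 < lam)
    (hq : ∀ z, HasDerivAt q (q' z) z)
    (hq' : ∀ z, HasDerivAt q' ((lam - (6 * (1 / cosh z) ^ 2 - 4)) * q z) z)
    (hq₀ : 0 < q z₀) (hW₀ : 0 ≤ W₀ q q' z₀) :
    ¬ Integrable fun z => q z ^ 2 := by
  obtain ⟨z₁, hq₁, hW₁, hW_mono⟩ := exists_pos_wronskian_forall_le
    (V := fun z => 6 * (1 / cosh z) ^ 2 - 4) hlam (fun z => by positivity) hasDerivAt_sech_sq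
    hasDerivAt_deriv_sech_sq hq hq' hq₀ hW₀
  set κ := min (W₀ q q' z₁) (q z₁)
  have hκ : 0 < κ := lt_min hW₁ hq₁
  have hq_ge := forall_ge_le_of_le_wronskian_sech_sq hκ.le hq
    (fun z hz => (min_le_left _ _).trans (hW_mono z hz)) (min_le_right _ _)
  exact not_integrable_of_forall_ge (pow_pos hκ 2) fun z hz =>
    pow_le_pow_left₀ hκ.le (hq_ge z hz) 2

lemma not_integrable_sq_of_ne_zero {q q' : ℝ → ℝ} {lam z₀ : ℝ} (hlam : 0 < lam)
    (hq : ∀ z, HasDerivAt q (q' z) z)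
    (hq' : ∀ z, HasDerivAt q' ((lam - (6 * (1 / cosh z) ^ 2 - 4)) * q z) z)
    (hq₀ : q z₀ ≠ 0) :
    ¬ Integrable fun z => q z ^ 2 := by
  wlog hpos : 0 < q z₀ generalizing q q'
  · simpa using this (q := -q) (q' := -q') (fun z => (hq z).neg)
      (fun z => (hq' z).neg.congr_deriv (by simp only [Pi.neg_apply]; ring))
      (neg_ne_zero.mpr hq₀) (neg_pos.mpr (lt_of_le_of_ne (not_lt.mp hpos) hq₀))
  wlog hW : 0 ≤ W₀ q q' z₀ generalizing q q' z₀
  · -- `z ↦ -z` fixes `sech²`, and flips the sign of the Wronskian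
    refine fun hint => this (q := fun z => q (-z)) (q' := fun z => -q' (-z)) (z₀ := -z₀)
      (fun z => ((hq (-z)).comp z (hasDerivAt_neg z)).congr_deriv (by ring))
      (fun z => ((hq' (-z)).comp z (hasDerivAt_neg z)).neg.congr_deriv
        (by rw [cosh_neg]; ring))
      (by rwa [neg_neg]) (by rwa [neg_neg]) ?_ hint.comp_neg
    simp only [wronskian, neg_neg, cosh_neg, tanh_neg] at hW ⊢
    linarith
  exact not_integrable_sq_of_pos_of_wronskian_nonneg hlam hq hq' hpos hW

/-- sech² satisfies q'' + 6 sech² q − 4q = 0 (eigenvalue 0),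
sech·tanh satisfies q'' + 6 sech² q − 4q = −3q (eigenvalue −3), and the operator
q ↦ q'' + 6 sech² q − 4q has no eigenvalue λ > 0 with a nonzero L² eigenfunction. -/
theorem stationary_front_spectrum :
    (∀ z : ℝ, deriv (deriv (fun w => (1 / Real.cosh w) ^ 2)) z
        + 6 * (1 / Real.cosh z) ^ 2 * (1 / Real.cosh z) ^ 2
        - 4 * (1 / Real.cosh z) ^ 2 = 0)
    ∧ (∀ z : ℝ, deriv (deriv (fun w => (1 / Real.cosh w) * Real.tanh w)) z
        + 6 * (1 / Real.cosh z) ^ 2 * ((1 / Real.cosh z) * Real.tanh z)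
        - 4 * ((1 / Real.cosh z) * Real.tanh z)
          = -3 * ((1 / Real.cosh z) * Real.tanh z))
    ∧ ∀ lam : ℝ, 0 < lam →
        ¬ ∃ q : ℝ → ℝ, q ≠ 0 ∧ ContDiff ℝ 2 q
          ∧ Integrable (fun z => (q z) ^ 2)
          ∧ ∀ z : ℝ, deriv (deriv q) z + 6 * (1 / Real.cosh z) ^ 2 * q z - 4 * q z
              = lam * q z := by
  refine ⟨fun z => ?_, fun z => ?_, ?_⟩
  · rw [deriv_deriv_sech_sq]; ring
  · rw [deriv_deriv_sech_mul_tanh]; ring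
  · rintro lam hlam ⟨q, hq_ne, hq_smooth, hq_int, hq_eq⟩
    obtain ⟨z₀, hz₀⟩ := Function.ne_iff.mp hq_ne
    have hq : ∀ z, HasDerivAt q (deriv q z) z := fun z =>
      ((hq_smooth.differentiable (by norm_num)) z).hasDerivAt
    have hdq : Differentiable ℝ (deriv q) :=
      (hq_smooth.iterate_deriv' 1 1).differentiable (by norm_num)
    have hq' : ∀ z, HasDerivAt (deriv q) ((lam - (6 * (1 / cosh z) ^ 2 - 4)) * q z) z :=
      fun z => (hdq z).hasDerivAt.congr_deriv (by linear_combination hq_eq z)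
    exact not_integrable_sq_of_ne_zero hlam hq hq' hz₀ hq_int
end

section
/- For c > 0 and λ > 0 real, the cubic −μ³ + (λ/c)μ² + 2λμ − λ²/c has three distinct real roots, exactly one of which is negative and two positive. Its discriminant equals λ³(32 + λ(13c² + 4λ)/c⁴), which is positive for λ > 0. -/
/-! Write `r = λ/c`, so that the cubic is `f μ = μ²(r - μ) + λ(2μ - r)`. With `t = λ + 1` it
changes sign along `-t < 0 < r < r + t` (`f(-t) > 0`, `f 0 = -λr`, `f r = λr`, `f(r+t) < 0`), so
the intermediate value theorem gives a negative root and two positive ones; three distinct roots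
of a cubic are all of its roots. -/

open Set

theorem exists_three_zeros_of_sign_changes {f : ℝ → ℝ} (hf : Continuous f) {a b c d : ℝ}
    (hab : a < b) (hbc : b < c) (hcd : c < d)
    (ha : 0 < f a) (hb : f b < 0) (hc : 0 < f c) (hd : f d < 0) :
    ∃ x ∈ Ioo a b, ∃ y ∈ Ioo b c, ∃ z ∈ Ioo c d, f x = 0 ∧ f y = 0 ∧ f z = 0 := by
  obtain ⟨x, hx, fx⟩ := intermediate_value_Ioo' hab.le hf.continuousOn ⟨hb, ha⟩
  obtain ⟨y, hy, fy⟩ := intermediate_value_Ioo hbc.le hf.continuousOn ⟨hb, hc⟩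
  obtain ⟨z, hz, fz⟩ := intermediate_value_Ioo' hcd.le hf.continuousOn ⟨hd, hc⟩
  exact ⟨x, hx, y, hy, z, hz, fx, fy, fz⟩

section Cubic

variable {K : Type*} [Field K] {a b c d x y z : K}

theorem cubic_eq_mul_of_three_roots (hxy : x ≠ y) (hxz : x ≠ z) (hyz : y ≠ z)
    (hx : a * x ^ 3 + b * x ^ 2 + c * x + d = 0) (hy : a * y ^ 3 + b * y ^ 2 + c * y + d = 0)
    (hz : a * z ^ 3 + b * z ^ 2 + c * z + d = 0) (μ : K) :
    a * μ ^ 3 + b * μ ^ 2 + c * μ + d = a * ((μ - x) * (μ - y) * (μ - z)) := by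
  -- divided differences of the cubic at `x, y`, at `x, z`, and then at `x, y, z`
  have hxy' : a * (x ^ 2 + x * y + y ^ 2) + b * (x + y) + c = 0 := by
    refine (mul_eq_zero.mp ?_).resolve_left (sub_ne_zero.mpr hxy)
    linear_combination hx - hy
  have hxz' : a * (x ^ 2 + x * z + z ^ 2) + b * (x + z) + c = 0 := by
    refine (mul_eq_zero.mp ?_).resolve_left (sub_ne_zero.mpr hxz)
    linear_combination hx - hz
  have hxyz : a * (x + y + z) + b = 0 := by
    refine (mul_eq_zero.mp ?_).resolve_left (sub_ne_zero.mpr hyz)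
    linear_combination hxy' - hxz'
  linear_combination (μ - x) * (μ - y) * hxyz + (μ - x) * hxy' + hx

theorem cubic_eq_zero_iff_of_three_roots (ha : a ≠ 0) (hxy : x ≠ y) (hxz : x ≠ z) (hyz : y ≠ z)
    (hx : a * x ^ 3 + b * x ^ 2 + c * x + d = 0) (hy : a * y ^ 3 + b * y ^ 2 + c * y + d = 0)
    (hz : a * z ^ 3 + b * z ^ 2 + c * z + d = 0) (μ : K) :
    a * μ ^ 3 + b * μ ^ 2 + c * μ + d = 0 ↔ μ = x ∨ μ = y ∨ μ = z := by
  rw [cubic_eq_mul_of_three_roots hxy hxz hyz hx hy hz]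
  simp only [mul_eq_zero, ha, false_or, sub_eq_zero, or_assoc]

end Cubic

theorem exists_farfield_cubic_roots {r lam : ℝ} (hr : 0 < r) (hlam : 0 < lam) :
    ∃ x y z : ℝ, x < 0 ∧ 0 < y ∧ y < z ∧
      ∀ μ : ℝ, -μ ^ 3 + r * μ ^ 2 + 2 * lam * μ - lam * r = 0 ↔ μ = x ∨ μ = y ∨ μ = z := by
  set f : ℝ → ℝ := fun μ => -μ ^ 3 + r * μ ^ 2 + 2 * lam * μ - lam * r
  have hf : Continuous f := by fun_prop
  set t := lam + 1
  have ht : 0 < t := by positivity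
  have ht2 : 2 * lam < t ^ 2 := by nlinarith
  have hf_neg_t : 0 < f (-t) := by
    have : f (-t) = t ^ 2 * (r + t) - lam * (2 * t + r) := by ring
    nlinarith [mul_lt_mul_of_pos_right ht2 (add_pos hr ht)]
  have hf_zero : f 0 < 0 := by
    have : f 0 = -(lam * r) := by ring
    exact this ▸ neg_lt_zero.mpr (mul_pos hlam hr)
  have hf_r : 0 < f r := by
    have : f r = lam * r := by ring
    exact this ▸ mul_pos hlam hr
  have hf_r_add_t : f (r + t) < 0 := by
    have : f (r + t) = -((r + t) ^ 2 * t) + lam * (r + 2 * t) := by ring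
    nlinarith [mul_lt_mul_of_pos_left ht2 (add_pos hr ht), mul_pos hr ht, mul_pos hlam hr]
  obtain ⟨x, hx, y, hy, z, hz, fx, fy, fz⟩ := exists_three_zeros_of_sign_changes hf
    (neg_lt_zero.mpr ht) hr (lt_add_of_pos_right r ht) hf_neg_t hf_zero hf_r hf_r_add_t
  have hxy : x < y := hx.2.trans hy.1
  have hyz : y < z := hy.2.trans hz.1
  refine ⟨x, y, z, hx.2, hy.1, hyz, fun μ => ?_⟩
  convert cubic_eq_zero_iff_of_three_roots (a := -1) (b := r) (c := 2 * lam) (d := -(lam * r))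
    (by norm_num) hxy.ne (hxy.trans hyz).ne hyz.ne (by linear_combination fx)
    (by linear_combination fy) (by linear_combination fz) μ using 2
  ring

/-- For c > 0 and λ > 0 the cubic −μ³ + (λ/c)μ² + 2λμ − λ²/c has three
distinct real roots, exactly one negative and two positive; its discriminant equals
λ³(32 + λ(13c² + 4λ)/c⁴), which is positive. -/
theorem farfield_cubic_roots (c lam : ℝ) (hc : 0 < c) (hlam : 0 < lam) :
    (∃ μ₁ μ₂ μ₃ : ℝ, μ₁ ≠ μ₂ ∧ μ₁ ≠ μ₃ ∧ μ₂ ≠ μ₃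
      ∧ μ₁ < 0 ∧ 0 < μ₂ ∧ 0 < μ₃
      ∧ (∀ μ : ℝ, -μ ^ 3 + (lam / c) * μ ^ 2 + 2 * lam * μ - lam ^ 2 / c = 0
          ↔ μ = μ₁ ∨ μ = μ₂ ∨ μ = μ₃))
    ∧ (Cubic.mk (-1 : ℝ) (lam / c) (2 * lam) (-(lam ^ 2) / c)).discr
        = lam ^ 3 * (32 + lam * (13 * c ^ 2 + 4 * lam) / c ^ 4)
    ∧ 0 < lam ^ 3 * (32 + lam * (13 * c ^ 2 + 4 * lam) / c ^ 4) := by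
  obtain ⟨x, y, z, hx, hy, hyz, hroots⟩ := exists_farfield_cubic_roots (div_pos hlam hc) hlam
  have hsq : lam ^ 2 / c = lam * (lam / c) := by ring
  refine ⟨⟨x, y, z, (hx.trans hy).ne, (hx.trans (hy.trans hyz)).ne, hyz.ne, hx, hy,
    hy.trans hyz, fun μ => hsq ▸ hroots μ⟩, ?_, by positivity⟩
  simp only [Cubic.discr]
  field_simp
  ring
end

section
/- For δ > 0 and 0 < γ < 1, the functions u(z) = −1/2 + (1/2)tanh(√(δ/8)·z) and v(z) = −u'(z)/c − u(z), with c = [√δ(1−2γ) + √(δ(1−2γ)² + 8)]/(2√2), satisfy the travelling wave system u'' + c u' + g(u,v) = 0 and c v' − g(u,v) = 0 (i.e. the D=0 system), where g(u,v) = (u+v) − δ·u(u+γ)(u+1). -/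
/-!
Writing `T = tanh (k z)`, the profile `u = (T - 1) / 2` satisfies `u' = -2k u (u + 1)`, hence
`u'' = 4k² u (u + 1) (2u + 1)`, and with `δ = 8k²` it solves the bistable front equation
`u'' + s u' = δ u (u + γ) (u + 1)` at speed `s = 2k (1 - 2γ)`. Because `v = -u'/c - u`, we have
`u + v = -u'/c` and `c v' = -(u'' + c u')`, so the second equation of the system is the negative
of the first, and the first reduces to the front equation exactly when `c² = s c + 1`. The given
`c` is its root `(s + √(s² + 4)) / 2`.
-/

open Real

theorem Real.hasDerivAt_tanh (x : ℝ) : HasDerivAt tanh (1 - tanh x ^ 2) x := by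
  rw [show tanh = fun y => sinh y / cosh y from funext tanh_eq_sinh_div_cosh]
  refine ((hasDerivAt_sinh x).div (hasDerivAt_cosh x) (cosh_pos x).ne').congr_deriv ?_
  field_simp

theorem sq_quadraticRoot (b : ℝ) :
    ((b + √(b ^ 2 + 4)) / 2) ^ 2 = b * ((b + √(b ^ 2 + 4)) / 2) + 1 := by
  linear_combination (1 / 4 : ℝ) * sq_sqrt (by positivity : (0 : ℝ) ≤ b ^ 2 + 4)

noncomputable def tanhFront (k z : ℝ) : ℝ := -1 / 2 + 1 / 2 * tanh (k * z)

section TanhFront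

variable (k : ℝ)

theorem hasDerivAt_tanhFront (z : ℝ) :
    HasDerivAt (tanhFront k) (-2 * k * tanhFront k z * (tanhFront k z + 1)) z := by
  refine ((((Real.hasDerivAt_tanh (k * z)).comp z ((hasDerivAt_id z).const_mul k)).const_mul
    (1 / 2 : ℝ)).const_add (-1 / 2)).congr_deriv ?_
  simp only [tanhFront]
  ring

theorem deriv_tanhFront :
    deriv (tanhFront k) = fun z => -2 * k * tanhFront k z * (tanhFront k z + 1) :=
  funext fun z => (hasDerivAt_tanhFront k z).deriv

theorem hasDerivAt_deriv_tanhFront (z : ℝ) :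
    HasDerivAt (deriv (tanhFront k))
      (4 * k ^ 2 * tanhFront k z * (tanhFront k z + 1) * (2 * tanhFront k z + 1)) z := by
  rw [deriv_tanhFront]
  have hu := hasDerivAt_tanhFront k z
  refine ((hu.const_mul (-2 * k)).mul (hu.add_const 1)).congr_deriv ?_
  ring

theorem tanhFront_frontEquation (γ z : ℝ) :
    deriv (deriv (tanhFront k)) z + 2 * k * (1 - 2 * γ) * deriv (tanhFront k) z
      = 8 * k ^ 2 * tanhFront k z * (tanhFront k z + γ) * (tanhFront k z + 1) := by
  rw [(hasDerivAt_deriv_tanhFront k z).deriv, (hasDerivAt_tanhFront k z).deriv]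
  ring

end TanhFront

theorem wylieMiura_speed_eq {δ : ℝ} (hδ : 0 ≤ δ) (γ : ℝ) :
    (√δ * (1 - 2 * γ) + √(δ * (1 - 2 * γ) ^ 2 + 8)) / (2 * √2)
      = (2 * √(δ / 8) * (1 - 2 * γ) + √((2 * √(δ / 8) * (1 - 2 * γ)) ^ 2 + 4)) / 2 := by
  have h2sq : √2 ^ 2 = 2 := sq_sqrt zero_le_two
  have hk : √(δ / 8) ^ 2 = δ / 8 := sq_sqrt (by positivity)
  have hδ' : √δ = 2 * √2 * √(δ / 8) := by
    rw [sqrt_eq_iff_eq_sq hδ (by positivity), mul_pow, mul_pow, h2sq, hk]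
    ring
  have hdisc : √(δ * (1 - 2 * γ) ^ 2 + 8)
      = √2 * √((2 * √(δ / 8) * (1 - 2 * γ)) ^ 2 + 4) := by
    rw [← sqrt_mul zero_le_two, mul_pow, mul_pow, hk]
    ring_nf
  rw [hδ', hdisc]
  field_simp

theorem travellingWave_of_frontEquation {u F : ℝ → ℝ} {c s z : ℝ} (hc : c ^ 2 = s * c + 1)
    (hu : DifferentiableAt ℝ u z) (hu' : DifferentiableAt ℝ (deriv u) z)
    (hfront : deriv (deriv u) z + s * deriv u z = F (u z)) :
    let v : ℝ → ℝ := fun z => -(deriv u z) / c - u z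
    deriv (deriv u) z + c * deriv u z + ((u z + v z) - F (u z)) = 0
      ∧ c * deriv v z - ((u z + v z) - F (u z)) = 0 := by
  intro v
  have hc0 : c ≠ 0 := by
    rintro rfl
    norm_num at hc
  have hv : deriv v z = -deriv (deriv u) z / c - deriv u z :=
    ((hu'.hasDerivAt.neg.div_const c).sub hu.hasDerivAt).deriv
  have first : deriv (deriv u) z + c * deriv u z + ((u z + v z) - F (u z)) = 0 := by
    simp only [v]
    field_simp
    linear_combination c * hfront + deriv u z * hc
  refine ⟨first, ?_⟩
  rw [hv, mul_sub, mul_div_cancel₀ _ hc0]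
  linear_combination -first

theorem nonstationary_front_D_zero_general (δ γ : ℝ) (hδ : 0 < δ) :
    let g : ℝ → ℝ → ℝ := fun u v => (u + v) - δ * u * (u + γ) * (u + 1)
    let c : ℝ := (Real.sqrt δ * (1 - 2 * γ)
        + Real.sqrt (δ * (1 - 2 * γ) ^ 2 + 8)) / (2 * Real.sqrt 2)
    let u : ℝ → ℝ := fun z => -1 / 2 + (1 / 2) * Real.tanh (Real.sqrt (δ / 8) * z)
    let v : ℝ → ℝ := fun z => -(deriv u z) / c - u z
    ∀ z : ℝ,
      deriv (deriv u) z + c * deriv u z + g (u z) (v z) = 0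
        ∧ c * deriv v z - g (u z) (v z) = 0 := by
  intro g c u v z
  set k := √(δ / 8)
  have hc : c ^ 2 = 2 * k * (1 - 2 * γ) * c + 1 := by
    simpa only [c, wylieMiura_speed_eq hδ.le γ] using sq_quadraticRoot (2 * k * (1 - 2 * γ))
  have hfront := tanhFront_frontEquation k γ z
  rw [show 8 * k ^ 2 = δ by rw [sq_sqrt (by positivity)]; ring] at hfront
  exact travellingWave_of_frontEquation (F := fun w => δ * w * (w + γ) * (w + 1)) hc
    (hasDerivAt_tanhFront k z).differentiableAt
    (hasDerivAt_deriv_tanhFront k z).differentiableAt hfront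

/-- The Wylie–Miura nonstationary front solves the D = 0 travelling
wave system u'' + c u' + g(u,v) = 0, c v' − g(u,v) = 0 with
g(u,v) = (u+v) − δ u(u+γ)(u+1). -/
theorem nonstationary_front_D_zero (δ γ : ℝ) (hδ : 0 < δ) (hγ0 : 0 < γ) (hγ1 : γ < 1) :
    let g : ℝ → ℝ → ℝ := fun u v => (u + v) - δ * u * (u + γ) * (u + 1)
    let c : ℝ := (Real.sqrt δ * (1 - 2 * γ)
        + Real.sqrt (δ * (1 - 2 * γ) ^ 2 + 8)) / (2 * Real.sqrt 2)
    let u : ℝ → ℝ := fun z => -1 / 2 + (1 / 2) * Real.tanh (Real.sqrt (δ / 8) * z)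
    let v : ℝ → ℝ := fun z => -(deriv u z) / c - u z
    ∀ z : ℝ,
      deriv (deriv u) z + c * deriv u z + g (u z) (v z) = 0
        ∧ c * deriv v z - g (u z) (v z) = 0 :=
  nonstationary_front_D_zero_general δ γ hδ
end
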